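/- arXiv:1311.3362 — 3 statements merged into one kernel-verified Lean document; each statement's English description precedes it below -/
import Mathlib

section
/- Let G ≤ Aut(X^ω) be a self-similar group. Suppose there exist g ∈ G of infinite order and v ∈ X* (v nonempty) such that g|_v = g and g(v) = v. Then the action of G is not contracting: there is no finite subset N ⊆ G such that for every h ∈ G there exists k ∈ ℕ with h|_u ∈ N for all u ∈ X* of length ≥ k. -/
namespace Stmt2

/-- A self-similar action of a group `G` on the words over the alphabet `X`,
with restriction maps satisfying `(gh)|_v = g|_{h(v)} · h|_v`,
`g(uv) = g(u) · g|_u(v)` and `g|_{uv} = (g|_u)|_v`. -/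
structure SelfSimilarAction (G X : Type*) [Group G] where
  /-- the action of a group element on words -/
  act : G → List X → List X
  /-- the restriction of a group element at a word -/
  res : G → List X → G
  act_one : ∀ v, act 1 v = v
  act_mul : ∀ g h v, act (g * h) v = act g (act h v)
  res_mul : ∀ g h v, res (g * h) v = res g (act h v) * res h v
  act_append : ∀ g u v, act g (u ++ v) = act g u ++ act (res g u) v
  res_append : ∀ g u v, res g (u ++ v) = res (res g u) v

/-- The `k`-fold concatenation `v^k` of the word `v`. -/
def wordPow {X : Type*} (v : List X) (k : ℕ) : List X := (List.replicate k v).flatten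

/-- If there is an element `g` of infinite order and a nonempty word `v` with
`g|_v = g` and `g(v) = v`, then the action is not contracting: there is no finite
subset `N ⊆ G` such that every `h ∈ G` restricts into `N` on all sufficiently long
words. -/
theorem noncontracting_of_fixed_restriction {G X : Type*} [Group G]
    (A : SelfSimilarAction G X) (g : G) (hg : ∀ n : ℕ, 1 ≤ n → g ^ n ≠ 1)
    (v : List X) (hv : v ≠ []) (h1 : A.res g v = g) (h2 : A.act g v = v) :
    ¬ ∃ N : Finset G, ∀ h : G, ∃ k : ℕ, ∀ u : List X, k ≤ u.length → A.res h u ∈ N := by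
  rintro ⟨N, hN⟩
  -- act (g^n) v = v
  have hact : ∀ n : ℕ, A.act (g ^ n) v = v := by
    intro n
    induction n with
    | zero => simpa using A.act_one v
    | succ n ih => rw [pow_succ, A.act_mul, h2, ih]
  -- res (g^n) v = g^n
  have hres : ∀ n : ℕ, A.res (g ^ n) v = g ^ n := by
    intro n
    induction n with
    | zero =>
      have := A.res_mul 1 1 v
      simp [A.act_one] at this
      simpa using this
    | succ n ih => rw [pow_succ, A.res_mul, h2, h1, ih]
  -- res (g^n) (v^k) = g^n
  have hresk : ∀ n k : ℕ, A.res (g ^ n) (wordPow v k) = g ^ n := by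
    intro n k
    induction k with
    | zero =>
      have : wordPow v 0 = ([] : List X) := rfl
      rw [this]
      have := A.res_append (g ^ n) [] []
      have h0 : A.res (g ^ n) ([] : List X) = g ^ n := by
        have := A.res_mul (g ^ n) 1 []
        -- alternative: use res on v via append with []
        have hA := A.res_append (g ^ n) v []
        simp at hA
        -- hA : res (g^n) v = res (res (g^n) v) []
        rw [hres] at hA
        exact hA.symm
      exact h0
    | succ k ih =>
      have hw : wordPow v (k + 1) = v ++ wordPow v k := by
        simp [wordPow, List.replicate_succ]
      rw [hw, A.res_append, hres, ih]
  -- each g^n lies in N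
  have hmem : ∀ n : ℕ, g ^ n ∈ N := by
    intro n
    obtain ⟨k, hk⟩ := hN (g ^ n)
    have hlen : 1 ≤ v.length := List.length_pos_iff.mpr hv
    have : k ≤ (wordPow v k).length := by
      have : (wordPow v k).length = k * v.length := by
        simp [wordPow]
      rw [this]
      calc k = k * 1 := (mul_one k).symm
        _ ≤ k * v.length := Nat.mul_le_mul_left k hlen
    have := hk (wordPow v k) this
    rwa [hresk] at this
  -- injectivity
  have hinj : Function.Injective (fun n : ℕ => g ^ n) := by
    intro a b hab
    simp only at hab
    by_contra hne
    rcases Nat.lt_or_ge a b with h | h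
    · have heq : g ^ a * g ^ (b - a) = g ^ a * 1 := by
        rw [mul_one, ← pow_add, Nat.add_sub_cancel' h.le, hab]
      exact absurd (mul_left_cancel heq) (hg (b - a) (by omega))
    · rcases Nat.lt_or_ge b a with h' | h'
      · have heq : g ^ b * g ^ (a - b) = g ^ b * 1 := by
          rw [mul_one, ← pow_add, Nat.add_sub_cancel' h'.le, hab]
        exact absurd (mul_left_cancel heq) (hg (a - b) (by omega))
      · omega
  exact (N.finite_toSet).not_infinite
    (Set.infinite_of_injective_forall_mem hinj (fun n => hmem n))

end Stmt2
end

section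
/- Let G ≤ Aut(X^ω) be a self-similar group with g ∈ G and nonempty v ∈ X* satisfying g|_v = g and g(v) = v. If the action is contracting with nucleus N, then {g^n : n ≥ 1} ⊆ N; in particular g has finite order. -/
namespace Stmt3

/-- A self-similar action of a group `G` on the words over the alphabet `X`,
with restriction maps satisfying `(gh)|_v = g|_{h(v)} · h|_v`,
`g(uv) = g(u) · g|_u(v)` and `g|_{uv} = (g|_u)|_v`. -/
structure SelfSimilarAction (G X : Type*) [Group G] where
  /-- the action of a group element on words -/
  act : G → List X → List X
  /-- the restriction of a group element at a word -/
  res : G → List X → G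
  act_one : ∀ v, act 1 v = v
  act_mul : ∀ g h v, act (g * h) v = act g (act h v)
  res_mul : ∀ g h v, res (g * h) v = res g (act h v) * res h v
  act_append : ∀ g u v, act g (u ++ v) = act g u ++ act (res g u) v
  res_append : ∀ g u v, res g (u ++ v) = res (res g u) v

/-- The `k`-fold concatenation `v^k` of the word `v`. -/
def wordPow {X : Type*} (v : List X) (k : ℕ) : List X := (List.replicate k v).flatten

/-- If `g|_v = g` and `g(v) = v` for a nonempty `v`, and the action is contracting
with nucleus `N`, then `{gⁿ : n ≥ 1} ⊆ N`; in particular `g` has finite order. -/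
theorem nucleus_contains_powers {G X : Type*} [Group G] (A : SelfSimilarAction G X)
    (g : G) (v : List X) (hv : v ≠ []) (h1 : A.res g v = g) (h2 : A.act g v = v)
    (N : Finset G)
    (hcov : ∀ h : G, ∃ k : ℕ, ∀ u : List X, k ≤ u.length → A.res h u ∈ N)
    (hmin : ∀ N' : Finset G,
      (∀ h : G, ∃ k : ℕ, ∀ u : List X, k ≤ u.length → A.res h u ∈ N') → N ⊆ N') :
    (∀ n : ℕ, 1 ≤ n → g ^ n ∈ N) ∧ ∃ n : ℕ, 1 ≤ n ∧ g ^ n = 1 := by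
  -- act of powers fixes v, res of powers at v is the power
  have hact : ∀ n : ℕ, A.act (g ^ n) v = v := by
    intro n
    induction n with
    | zero => simpa using A.act_one v
    | succ n ih => rw [pow_succ', A.act_mul, ih, h2]
  have hres : ∀ n : ℕ, A.res (g ^ n) v = g ^ n := by
    intro n
    induction n with
    | zero =>
      have := A.res_mul 1 1 v
      simp [A.act_one] at this
      simpa using this
    | succ n ih => rw [pow_succ', A.res_mul, hact, h1, ih]
  have hword : ∀ n k : ℕ, A.res (g ^ n) (wordPow v (k + 1)) = g ^ n := by
    intro n k
    induction k with
    | zero => simpa [wordPow] using hres n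
    | succ k ih =>
      have : wordPow v (k + 2) = v ++ wordPow v (k + 1) := by
        simp [wordPow, List.replicate_succ]
      rw [this, A.res_append, hres, ih]
  have hmem : ∀ n : ℕ, g ^ n ∈ N := by
    intro n
    obtain ⟨k, hk⟩ := hcov (g ^ n)
    have hlen : k ≤ (wordPow v (k + 1)).length := by
      have hv1 : 1 ≤ v.length := List.length_pos_iff.mpr hv
      have : (wordPow v (k + 1)).length = (k + 1) * v.length := by
        simp [wordPow, List.length_flatten, Nat.mul_comm]
      rw [this]
      calc k ≤ (k + 1) * 1 := by omega
        _ ≤ (k + 1) * v.length := Nat.mul_le_mul_left _ hv1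
    have := hk _ hlen
    rwa [hword n k] at this
  refine ⟨fun n _ => hmem n, ?_⟩
  have key : ∀ a b : ℕ, a ≤ b → g ^ a = g ^ b → g ^ (b - a) = 1 := by
    intro a b hle he
    have h3 : g ^ (b - a) * g ^ a = 1 * g ^ a := by
      rw [one_mul, ← pow_add, show b - a + a = b from by omega, ← he]
    exact mul_right_cancel h3
  obtain ⟨a, b, hne, hab⟩ :=
    Finite.exists_ne_map_eq_of_infinite (fun n : ℕ => (⟨g ^ n, hmem n⟩ : {x // x ∈ N}))
  have hab' : g ^ a = g ^ b := by simpa using hab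
  rcases Nat.lt_or_ge a b with h | h
  · exact ⟨b - a, by omega, key a b (by omega) hab'⟩
  · exact ⟨a - b, by omega, key b a (by omega) hab'.symm⟩


end Stmt3
end

section
/- Let G be a self-similar group with finite generating set S acting faithfully on X* for a finite alphabet X, and suppose there exist g ∈ G of infinite order and a nonempty v ∈ X* with g|_v = g and g(v) = v. Then the self-similarity graph Σ(G) (vertices X*, horizontal edges {u, s(u)} for s ∈ S, vertical edges {u, xu} for x ∈ X) admits no increasing unbounded divergence function; in particular, Σ(G) is not Gromov hyperbolic. -/
namespace Stmt19

/-- A self-similar action of a group `G` on the words over the alphabet `X`,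
with restriction maps satisfying `(gh)|_v = g|_{h(v)} · h|_v`,
`g(uv) = g(u) · g|_u(v)` and `g|_{uv} = (g|_u)|_v`. -/
structure SelfSimilarAction (G X : Type*) [Group G] where
  /-- the action of a group element on words -/
  act : G → List X → List X
  /-- the restriction of a group element at a word -/
  res : G → List X → G
  act_one : ∀ v, act 1 v = v
  act_mul : ∀ g h v, act (g * h) v = act g (act h v)
  res_mul : ∀ g h v, res (g * h) v = res g (act h v) * res h v
  act_append : ∀ g u v, act g (u ++ v) = act g u ++ act (res g u) v
  res_append : ∀ g u v, res g (u ++ v) = res (res g u) v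

/-- The `k`-fold concatenation `v^k` of the word `v`. -/
def wordPow {X : Type*} (v : List X) (k : ℕ) : List X := (List.replicate k v).flatten

/-- The self-similarity graph of a self-similar group with generating set `S`:
vertices are the words over `X`, with horizontal edges `{u, s(u)}` for `s ∈ S` and
vertical edges `{u, xu}` for `x ∈ X`. -/
def ssGraph {G X : Type*} [Group G] (A : SelfSimilarAction G X) (S : Finset G) :
    SimpleGraph (List X) where
  Adj u w := u ≠ w ∧
    ((∃ s ∈ S, u = A.act s w ∨ w = A.act s u) ∨ ∃ x : X, u = x :: w ∨ w = x :: u)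
  symm := by
    constructor
    rintro u w ⟨hne, (⟨s, hs, h | h⟩ | ⟨x, h | h⟩)⟩
    · exact ⟨hne.symm, Or.inl ⟨s, hs, Or.inr h⟩⟩
    · exact ⟨hne.symm, Or.inl ⟨s, hs, Or.inl h⟩⟩
    · exact ⟨hne.symm, Or.inr ⟨x, Or.inr h⟩⟩
    · exact ⟨hne.symm, Or.inr ⟨x, Or.inl h⟩⟩
  loopless := ⟨fun u h => h.1 rfl⟩

/-- `e : ℕ → ℝ` is a divergence function for the graph `Γ`: whenever two geodesics
`α, β` issue from a common vertex `y`, have length greater than `R + r`, and satisfy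
`dist (α R) (β R) > e 0`, every path from `α (R+r)` to `β (R+r)` staying outside the
open ball of radius `R + r` about `y` has length at least `e r`. -/
def IsDivergenceFunction {V : Type*} (Γ : SimpleGraph V) (e : ℕ → ℝ) : Prop :=
  ∀ (y pa pb : V) (R r : ℕ) (α : Γ.Walk y pa) (β : Γ.Walk y pb),
    α.length = Γ.dist y pa → β.length = Γ.dist y pb →
    R + r < α.length → R + r < β.length →
    e 0 < (Γ.dist (α.getVert R) (β.getVert R) : ℝ) →
    ∀ p : Γ.Walk (α.getVert (R + r)) (β.getVert (R + r)),
      (∀ z ∈ p.support, R + r ≤ Γ.dist y z) →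
      e r ≤ (p.length : ℝ)

/-- Gromov hyperbolicity of a graph, via the four-point condition for the
combinatorial distance. -/
def IsGromovHyperbolic {V : Type*} (Γ : SimpleGraph V) : Prop :=
  ∃ δ : ℝ, 0 ≤ δ ∧ ∀ x y z w : V,
    (Γ.dist x y : ℝ) + (Γ.dist z w : ℝ) ≤
      max ((Γ.dist x z : ℝ) + (Γ.dist y w : ℝ))
        ((Γ.dist x w : ℝ) + (Γ.dist y z : ℝ)) + δ

/-!
Because `g|_v = g` and `g(v) = v`, the words `v^k w` and `v^k g^n(w)` are joined inside their
level `|w| + k|v|` by a path whose length `L` depends on `n` but not on `k`, while they lie `k|v|`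
vertical steps above `w` and `g^n(w)`. As `g` has infinite order and acts faithfully, some
`g`-orbit has more points than a ball of radius `c` in this graph of bounded degree, so `w` and
`g^n(w)` can be chosen more than `c` apart. A divergence function `e` with `e(0) < c` would then
satisfy `e(k|v|) ≤ L` for all `k`; and for `k|v| ≥ L` the four-point condition, applied twice at
the empty word, bounds `d(w, g^n(w))` by `2δ`.
-/

open SimpleGraph

section FourPoint

variable {V : Type*} {Γ : SimpleGraph V}

theorem IsGromovHyperbolic.exists_dist_le_of_lifts (hΓ : IsGromovHyperbolic Γ) :
    ∃ C : ℝ, ∀ {o a b a' b' : V} {R K : ℕ},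
      Γ.dist o a ≤ R → Γ.dist o b ≤ R → Γ.dist o a' = R + K → Γ.dist o b' = R + K →
      Γ.dist a a' ≤ K → Γ.dist b b' ≤ K → Γ.dist a' b' ≤ 2 * K → (Γ.dist a b : ℝ) ≤ C := by
  obtain ⟨δ, hδ, H⟩ := hΓ
  refine ⟨2 * δ, fun {o a b a' b' R K} hoa hob hoa' hob' haa' hbb' ha'b' => ?_⟩
  have hao : (Γ.dist a o : ℝ) ≤ R := by rw [dist_comm]; exact_mod_cast hoa
  have hbo : (Γ.dist b o : ℝ) ≤ R := by rw [dist_comm]; exact_mod_cast hob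
  have hoa' : (Γ.dist o a' : ℝ) = R + K := by exact_mod_cast hoa'
  have hob' : (Γ.dist o b' : ℝ) = R + K := by exact_mod_cast hob'
  have hb'o : (Γ.dist b' o : ℝ) = R + K := by rw [dist_comm]; exact hob'
  have haa' : (Γ.dist a a' : ℝ) ≤ K := by exact_mod_cast haa'
  have hbb' : (Γ.dist b b' : ℝ) ≤ K := by exact_mod_cast hbb'
  have hb'a' : (Γ.dist b' a' : ℝ) ≤ 2 * K := by rw [dist_comm]; exact_mod_cast ha'b'
  have hab' : (Γ.dist a b' : ℝ) ≤ K + δ := by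
    have h := H a b' o a'
    have : max ((Γ.dist a o : ℝ) + Γ.dist b' a') (Γ.dist a a' + Γ.dist b' o) ≤ R + 2 * K :=
      max_le (by linarith) (by linarith)
    linarith
  have h := H a b o b'
  have : max ((Γ.dist a o : ℝ) + Γ.dist b b') (Γ.dist a b' + Γ.dist b o) ≤ R + K + δ :=
    max_le (by linarith) (by linarith)
  linarith

end FourPoint

section Balls

variable {V : Type*} {Γ : SimpleGraph V} [DecidableEq V]

theorem exists_finset_ball_of_moves (T : Finset (V → V))
    (hT : ∀ u w, Γ.Adj u w → ∃ f ∈ T, f u = w) (c : ℕ) :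
    ∃ B : V → Finset V, (∀ u, (B u).card ≤ (T.card + 1) ^ c) ∧
      ∀ u w (p : Γ.Walk u w), p.length ≤ c → w ∈ B u := by
  induction c with
  | zero => exact ⟨fun u => {u}, fun u => by simp, fun u w p hp => by
      cases p with
      | nil => simp
      | cons => simp at hp⟩
  | succ c ih =>
    obtain ⟨B, hBcard, hBmem⟩ := ih
    refine ⟨fun u => insert u (T.biUnion fun f => B (f u)), fun u => ?_, fun u w p hp => ?_⟩
    · calc (insert u (T.biUnion fun f => B (f u))).card
          ≤ (T.biUnion fun f => B (f u)).card + 1 := Finset.card_insert_le _ _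
        _ ≤ T.card * (T.card + 1) ^ c + 1 := by
          gcongr
          exact Finset.card_biUnion_le_card_mul _ _ _ fun f _ => hBcard (f u)
        _ ≤ (T.card + 1) ^ (c + 1) := by
          rw [pow_succ]
          nlinarith [Nat.one_le_pow c (T.card + 1) (Nat.succ_pos _)]
    · cases p with
      | nil => exact Finset.mem_insert_self _ _
      | cons h q =>
        obtain ⟨f, hf, rfl⟩ := hT _ _ h
        simp only [Walk.length_cons, Nat.add_le_add_iff_right] at hp
        exact Finset.mem_insert_of_mem (Finset.mem_biUnion.mpr ⟨f, hf, hBmem _ _ q hp⟩)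

end Balls

theorem wordPow_succ {X : Type*} (v : List X) (k : ℕ) : wordPow v (k + 1) = v ++ wordPow v k := by
  simp [wordPow, List.replicate_succ]

@[simp]
theorem length_wordPow {X : Type*} (v : List X) (k : ℕ) :
    (wordPow v k).length = k * v.length := by
  induction k with
  | zero => simp [wordPow]
  | succ k ih => rw [wordPow_succ, List.length_append, ih, Nat.succ_mul, Nat.add_comm]

namespace SelfSimilarAction

variable {G X : Type*} [Group G] (A : SelfSimilarAction G X)

theorem act_inv_act (g : G) (u : List X) : A.act g⁻¹ (A.act g u) = u := by
  rw [← A.act_mul, inv_mul_cancel, A.act_one]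

theorem act_act_inv (g : G) (u : List X) : A.act g (A.act g⁻¹ u) = u := by
  rw [← A.act_mul, mul_inv_cancel, A.act_one]

theorem act_injective (g : G) : Function.Injective (A.act g) :=
  Function.LeftInverse.injective (A.act_inv_act g)

theorem act_nil (g : G) : A.act g [] = [] := by
  have h := A.act_append g [] (A.act g⁻¹ [])
  rw [List.nil_append, act_act_inv] at h
  exact (List.append_eq_nil_iff.mp h.symm).1

theorem length_le_length_act (u : List X) (g : G) : u.length ≤ (A.act g u).length := by
  induction u generalizing g with
  | nil => simp
  | cons x t ih =>
    have hsplit : A.act g (x :: t) = A.act g [x] ++ A.act (A.res g [x]) t :=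
      A.act_append g [x] t
    have hx : A.act g [x] ≠ [] := fun h =>
      List.cons_ne_nil x [] (A.act_injective g (h.trans (A.act_nil g).symm))
    rw [hsplit, List.length_append, List.length_cons]
    have := List.length_pos_of_ne_nil hx
    have := ih (A.res g [x])
    omega

@[simp]
theorem length_act (g : G) (u : List X) : (A.act g u).length = u.length := by
  refine le_antisymm ?_ (A.length_le_length_act u g)
  simpa only [act_inv_act] using A.length_le_length_act (A.act g u) g⁻¹

theorem act_pow_eq_self {g : G} {u : List X} (hu : A.act g u = u) (q : ℕ) :
    A.act (g ^ q) u = u := by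
  induction q with
  | zero => rw [pow_zero, A.act_one]
  | succ q ih => rw [pow_succ, A.act_mul, hu, ih]

theorem exists_act_pow_ne_self (hfaithful : ∀ g : G, (∀ u : List X, A.act g u = u) → g = 1)
    {g : G} (hg : ∀ n : ℕ, 1 ≤ n → g ^ n ≠ 1) (K : ℕ) :
    ∃ w : List X, ∀ n, 1 ≤ n → n ≤ K → A.act (g ^ n) w ≠ w := by
  by_contra! hfix
  refine hg K.factorial K.factorial_pos (hfaithful _ fun w => ?_)
  obtain ⟨n, hn, hnK, hw⟩ := hfix w
  obtain ⟨q, hq⟩ := Nat.dvd_factorial hn hnK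
  rw [hq, pow_mul]
  exact A.act_pow_eq_self hw q

theorem exists_injOn_act_pow (hfaithful : ∀ g : G, (∀ u : List X, A.act g u = u) → g = 1)
    {g : G} (hg : ∀ n : ℕ, 1 ≤ n → g ^ n ≠ 1) (K : ℕ) :
    ∃ w : List X, Set.InjOn (fun i => A.act (g ^ i) w) (Finset.range (K + 1)) := by
  obtain ⟨w, hw⟩ := A.exists_act_pow_ne_self hfaithful hg K
  refine ⟨w, fun i hi j hj hij => ?_⟩
  simp only [Finset.coe_range, Set.mem_Iio] at hi hj
  have key : ∀ i j, i < j → j < K + 1 → A.act (g ^ i) w ≠ A.act (g ^ j) w := by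
    intro i j hij hj h
    refine hw (j - i) (by omega) (by omega) (A.act_injective (g ^ i) ?_)
    rw [← A.act_mul, ← pow_add, Nat.add_sub_cancel' hij.le, h]
  rcases lt_trichotomy i j with h | h | h
  · exact absurd hij (key i j h hj)
  · exact h
  · exact absurd hij.symm (key j i h hi)

theorem act_wordPow_append {g : G} {v : List X} (h1 : A.res g v = g) (h2 : A.act g v = v)
    (k : ℕ) (w : List X) : A.act g (wordPow v k ++ w) = wordPow v k ++ A.act g w := by
  induction k with
  | zero => rfl
  | succ k ih => rw [wordPow_succ, List.append_assoc, A.act_append, h1, h2, ih, List.append_assoc]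

theorem act_pow_wordPow_append {g : G} {v : List X} (h1 : A.res g v = g) (h2 : A.act g v = v)
    (n k : ℕ) (w : List X) :
    A.act (g ^ n) (wordPow v k ++ w) = wordPow v k ++ A.act (g ^ n) w := by
  induction n with
  | zero => simp only [pow_zero, A.act_one]
  | succ n ih => rw [pow_succ', A.act_mul, ih, A.act_wordPow_append h1 h2, A.act_mul]

end SelfSimilarAction

namespace ssGraph

open SelfSimilarAction

variable {G X : Type*} [Group G] (A : SelfSimilarAction G X) (S : Finset G)

theorem length_le_of_adj {u w : List X} (h : (ssGraph A S).Adj u w) :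
    w.length ≤ u.length + 1 := by
  obtain ⟨-, (⟨s, -, h | h⟩ | ⟨x, h | h⟩)⟩ := h
  · rw [h, length_act]; omega
  · rw [h, length_act]; omega
  · rw [h, List.length_cons]; omega
  · rw [h, List.length_cons]

theorem length_le_of_walk {u w : List X} (p : (ssGraph A S).Walk u w) :
    w.length ≤ u.length + p.length := by
  induction p with
  | nil => simp
  | cons h _ ih =>
    have := length_le_of_adj A S h
    rw [Walk.length_cons]
    omega

theorem adj_cons (x : X) (u : List X) : (ssGraph A S).Adj (x :: u) u :=
  ⟨by simp, Or.inr ⟨x, Or.inl rfl⟩⟩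

theorem adj_act {s : G} (hs : s ∈ S) {u : List X} (hu : A.act s u ≠ u) :
    (ssGraph A S).Adj u (A.act s u) :=
  ⟨hu.symm, Or.inl ⟨s, hs, Or.inr rfl⟩⟩

def downWalk : (u : List X) → (ssGraph A S).Walk u []
  | [] => Walk.nil
  | x :: t => Walk.cons (adj_cons A S x t) (downWalk t)

@[simp]
theorem length_downWalk (u : List X) : (downWalk A S u).length = u.length := by
  induction u with
  | nil => rfl
  | cons x t ih => rw [downWalk, Walk.length_cons, ih, List.length_cons]

theorem getVert_downWalk (u : List X) (i : ℕ) : (downWalk A S u).getVert i = u.drop i := by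
  induction u generalizing i with
  | nil => simp [downWalk]
  | cons x t ih =>
    cases i with
    | zero => rfl
    | succ i => rw [downWalk, Walk.getVert_cons_succ, ih, List.drop_succ_cons]

theorem getVert_reverse_downWalk {z u w : List X} (h : z = u ++ w) :
    (downWalk A S z).reverse.getVert w.length = w := by
  subst h
  rw [Walk.getVert_reverse, getVert_downWalk, length_downWalk, List.length_append,
    Nat.add_sub_cancel, List.drop_left]

theorem reachable (u w : List X) : (ssGraph A S).Reachable u w :=
  ⟨(downWalk A S u).append (downWalk A S w).reverse⟩

theorem dist_nil (u : List X) : (ssGraph A S).dist [] u = u.length := by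
  refine le_antisymm ?_ ?_
  · simpa using dist_le (downWalk A S u).reverse
  · obtain ⟨p, hp⟩ := (reachable A S [] u).exists_walk_length_eq_dist
    simpa [hp] using length_le_of_walk A S p

theorem dist_append_le (u w : List X) : (ssGraph A S).dist (u ++ w) w ≤ u.length := by
  have h := dist_le ((downWalk A S (u ++ w)).take u.length)
  rwa [Walk.take_length, getVert_downWalk, List.drop_left, length_downWalk,
    min_eq_left (by simp)] at h

theorem exists_moves [Fintype X] : ∃ T : Finset (List X → List X),
    ∀ u w, (ssGraph A S).Adj u w → ∃ f ∈ T, f u = w := by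
  classical
  refine ⟨S.image A.act ∪ S.image (fun s => A.act s⁻¹) ∪
    Finset.univ.image List.cons ∪ {List.tail}, fun u w h => ?_⟩
  obtain ⟨-, (⟨s, hs, h | rfl⟩ | ⟨x, rfl | rfl⟩)⟩ := h
  · refine ⟨A.act s⁻¹, ?_, by rw [h, act_inv_act]⟩
    simp only [Finset.mem_union, Finset.mem_image]
    exact Or.inl (Or.inl (Or.inr ⟨s, hs, rfl⟩))
  · refine ⟨A.act s, ?_, rfl⟩
    simp only [Finset.mem_union, Finset.mem_image]
    exact Or.inl (Or.inl (Or.inl ⟨s, hs, rfl⟩))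
  · exact ⟨List.tail, by simp, rfl⟩
  · exact ⟨List.cons x, by simp, rfl⟩

theorem exists_lt_dist_act_pow [Fintype X]
    (hfaithful : ∀ g : G, (∀ u : List X, A.act g u = u) → g = 1)
    {g : G} (hg : ∀ n : ℕ, 1 ≤ n → g ^ n ≠ 1) (c : ℕ) :
    ∃ w n, c < (ssGraph A S).dist w (A.act (g ^ n) w) := by
  classical
  obtain ⟨T, hT⟩ := exists_moves A S
  obtain ⟨B, hBcard, hBmem⟩ := exists_finset_ball_of_moves T hT c
  obtain ⟨w, hinj⟩ := A.exists_injOn_act_pow hfaithful hg ((T.card + 1) ^ c)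
  by_contra! hnear
  have hmaps : ∀ i ∈ Finset.range ((T.card + 1) ^ c + 1), A.act (g ^ i) w ∈ B w := by
    intro i _
    obtain ⟨p, hp⟩ := (reachable A S w (A.act (g ^ i) w)).exists_walk_length_eq_dist
    exact hBmem _ _ p (hp ▸ hnear w i)
  have hcard := Finset.card_le_card_of_injOn _ hmaps hinj
  rw [Finset.card_range] at hcard
  have := hBcard w
  omega

/-- Vertical edges change the length of a word, so walks inside one level are the horizontal
paths of the paper. -/
def HorizontallyBounded (h : G) : Prop :=
  ∃ L, ∀ u : List X, ∃ p : (ssGraph A S).Walk u (A.act h u),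
    p.length ≤ L ∧ ∀ z ∈ p.support, z.length = u.length

variable {A S}

theorem horizontallyBounded_of_mem {s : G} (hs : s ∈ S) : HorizontallyBounded A S s := by
  refine ⟨1, fun u => ?_⟩
  by_cases he : A.act s u = u
  · exact ⟨Walk.nil.copy rfl he.symm, by simp, by simp⟩
  · refine ⟨(adj_act A S hs he).toWalk, le_rfl, ?_⟩
    simp

theorem horizontallyBounded_one : HorizontallyBounded A S 1 :=
  ⟨0, fun u => ⟨Walk.nil.copy rfl (A.act_one u).symm, by simp, by simp⟩⟩

theorem HorizontallyBounded.mul {a b : G} (ha : HorizontallyBounded A S a)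
    (hb : HorizontallyBounded A S b) : HorizontallyBounded A S (a * b) := by
  obtain ⟨La, ha⟩ := ha
  obtain ⟨Lb, hb⟩ := hb
  refine ⟨Lb + La, fun u => ?_⟩
  obtain ⟨p, hpL, hpS⟩ := hb u
  obtain ⟨q, hqL, hqS⟩ := ha (A.act b u)
  refine ⟨p.append (q.copy rfl (A.act_mul a b u).symm), by simp; omega, fun z hz => ?_⟩
  rw [Walk.mem_support_append_iff, Walk.support_copy] at hz
  rcases hz with hz | hz
  · exact hpS z hz
  · rw [hqS z hz, length_act]

theorem HorizontallyBounded.inv {a : G} (ha : HorizontallyBounded A S a) :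
    HorizontallyBounded A S a⁻¹ := by
  obtain ⟨L, ha⟩ := ha
  refine ⟨L, fun u => ?_⟩
  obtain ⟨p, hpL, hpS⟩ := ha (A.act a⁻¹ u)
  refine ⟨p.reverse.copy (act_act_inv A a u) rfl, by simpa using hpL, fun z hz => ?_⟩
  rw [Walk.support_copy, Walk.support_reverse, List.mem_reverse] at hz
  rw [hpS z hz, length_act]

theorem horizontallyBounded (hgen : Subgroup.closure (S : Set G) = ⊤) (h : G) :
    HorizontallyBounded A S h := by
  induction (hgen ▸ Subgroup.mem_top h : h ∈ Subgroup.closure (S : Set G))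
    using Subgroup.closure_induction with
  | mem s hs => exact horizontallyBounded_of_mem hs
  | one => exact horizontallyBounded_one
  | mul a b _ _ ha hb => exact ha.mul hb
  | inv a _ ha => exact ha.inv

variable [Fintype X]
  (hfaithful : ∀ g : G, (∀ u : List X, A.act g u = u) → g = 1)
  (hgen : Subgroup.closure (S : Set G) = ⊤)
  {g : G} (hg : ∀ n : ℕ, 1 ≤ n → g ^ n ≠ 1)
  {v : List X} (h1 : A.res g v = g) (h2 : A.act g v = v)
include hfaithful hgen hg h1 h2

theorem exists_far_pair_with_close_lifts (c : ℕ) :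
    ∃ a b : List X, a.length = b.length ∧ c < (ssGraph A S).dist a b ∧ ∃ L, ∀ k,
      ∃ p : (ssGraph A S).Walk (wordPow v k ++ a) (wordPow v k ++ b),
        p.length ≤ L ∧ ∀ z ∈ p.support, z.length = k * v.length + a.length := by
  obtain ⟨w, n, hfar⟩ := exists_lt_dist_act_pow A S hfaithful hg c
  obtain ⟨L, hL⟩ := horizontallyBounded hgen (g ^ n)
  refine ⟨w, A.act (g ^ n) w, (length_act A _ w).symm, hfar, L, fun k => ?_⟩
  obtain ⟨p, hpL, hpS⟩ := hL (wordPow v k ++ w)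
  refine ⟨p.copy rfl (A.act_pow_wordPow_append h1 h2 n k w), by simpa using hpL, ?_⟩
  intro z hz
  rw [Walk.support_copy] at hz
  simpa using hpS z hz

theorem not_isGromovHyperbolic (hv : v ≠ []) : ¬ IsGromovHyperbolic (ssGraph A S) := by
  intro hhyp
  obtain ⟨C, hC⟩ := hhyp.exists_dist_le_of_lifts
  obtain ⟨a, b, hab, hfar, L, hlift⟩ :=
    exists_far_pair_with_close_lifts hfaithful hgen hg h1 h2 ⌈C⌉₊
  obtain ⟨p, hpL, -⟩ := hlift L
  have hK : L ≤ L * v.length := Nat.le_mul_of_pos_right L (List.length_pos_of_ne_nil hv)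
  have hdist : ∀ u, (ssGraph A S).dist [] (wordPow v L ++ u) = u.length + L * v.length := by
    intro u
    rw [dist_nil, List.length_append, length_wordPow, Nat.add_comm]
  have := hC (o := []) (a := a) (b := b) (a' := wordPow v L ++ a) (b' := wordPow v L ++ b)
    (R := a.length) (K := L * v.length)
    (dist_nil A S a).le (by rw [dist_nil, hab]) (hdist a) (by rw [hdist, hab])
    (by simpa [dist_comm] using dist_append_le A S (wordPow v L) a)
    (by simpa [dist_comm] using dist_append_le A S (wordPow v L) b)
    ((dist_le p).trans (by omega))
  have : (⌈C⌉₊ : ℝ) < (ssGraph A S).dist a b := by exact_mod_cast hfar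
  linarith [Nat.le_ceil C]

theorem not_exists_monotone_divergenceFunction (hv : v ≠ []) :
    ¬ ∃ e : ℕ → ℝ, Monotone e ∧ (∀ C : ℝ, ∃ n : ℕ, C < e n) ∧
      IsDivergenceFunction (ssGraph A S) e := by
  rintro ⟨e, he_mono, he_unbdd, he_div⟩
  obtain ⟨a, b, hab, hfar, L, hlift⟩ :=
    exists_far_pair_with_close_lifts hfaithful hgen hg h1 h2 ⌈e 0⌉₊
  obtain ⟨m, hm⟩ := he_unbdd L
  obtain ⟨p, hpL, hpS⟩ := hlift m
  have hv₀ := List.length_pos_of_ne_nil hv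
  set α := (downWalk A S (wordPow v (m + 1) ++ a)).reverse
  set β := (downWalk A S (wordPow v (m + 1) ++ b)).reverse
  have hlevel : a.length + m * v.length = (wordPow v m ++ a).length := by simp [Nat.add_comm]
  have hlevel' : a.length + m * v.length = (wordPow v m ++ b).length := by
    simp [hab, Nat.add_comm]
  have hα : α.getVert (a.length + m * v.length) = wordPow v m ++ a := by
    rw [hlevel, getVert_reverse_downWalk A S (u := v) (by rw [wordPow_succ, List.append_assoc])]
  have hβ : β.getVert (a.length + m * v.length) = wordPow v m ++ b := by
    rw [hlevel', getVert_reverse_downWalk A S (u := v) (by rw [wordPow_succ, List.append_assoc])]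
  have hsep : e 0 < (ssGraph A S).dist (α.getVert a.length) (β.getVert a.length) := by
    rw [getVert_reverse_downWalk A S rfl, hab, getVert_reverse_downWalk A S rfl]
    exact (Nat.le_ceil _).trans_lt (by exact_mod_cast hfar)
  have hdiv := he_div [] _ _ a.length (m * v.length) α β (by simp [α, dist_nil])
    (by simp [β, dist_nil]) (by simp [α]; nlinarith) (by simp [β, hab]; nlinarith) hsep
    (p.copy hα.symm hβ.symm) (fun z hz => by
      rw [Walk.support_copy] at hz
      rw [dist_nil, hpS z hz, Nat.add_comm])
  have hmono : e m ≤ e (m * v.length) := he_mono (Nat.le_mul_of_pos_right m hv₀)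
  have : ((p.copy hα.symm hβ.symm).length : ℝ) ≤ L := by simpa using hpL
  linarith

end ssGraph

/-- If a self-similar group `G` with finite generating set `S` acts faithfully on
`X*` for a finite alphabet `X`, and there are `g ∈ G` of infinite order and a
nonempty word `v` with `g|_v = g` and `g(v) = v`, then the self-similarity graph
admits no increasing unbounded divergence function; in particular it is not Gromov
hyperbolic. -/
theorem ssGraph_not_hyperbolic {G X : Type*} [Group G] [Fintype X]
    (A : SelfSimilarAction G X)
    (hfaithful : ∀ g : G, (∀ u : List X, A.act g u = u) → g = 1)
    (S : Finset G) (hgen : Subgroup.closure (S : Set G) = ⊤)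
    (g : G) (hg : ∀ n : ℕ, 1 ≤ n → g ^ n ≠ 1)
    (v : List X) (hv : v ≠ []) (h1 : A.res g v = g) (h2 : A.act g v = v) :
    (¬ ∃ e : ℕ → ℝ, StrictMono e ∧ (∀ C : ℝ, ∃ n : ℕ, C < e n) ∧
        IsDivergenceFunction (ssGraph A S) e) ∧
    ¬ IsGromovHyperbolic (ssGraph A S) :=
  ⟨fun ⟨e, he_mono, he_unbdd, he_div⟩ =>
    ssGraph.not_exists_monotone_divergenceFunction hfaithful hgen hg h1 h2 hv
      ⟨e, he_mono.monotone, he_unbdd, he_div⟩,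
   ssGraph.not_isGromovHyperbolic hfaithful hgen hg h1 h2 hv⟩

end Stmt19
end
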